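/- As ℓ → 0⁺ (with E > 0, C > 0, D ≥ 0, 1 < α < 2 fixed), the smallest positive root v_max(ℓ) of f_ℓ(v) = E ℓ^{2α/(2−α)} 2^{−α/(2−α)} − v² + C v^α + D v^{α−1}(ℓ/√2)^{2/(2−α)} converges to C^{1/(2−α)}, the unique positive root of C v^α = v². -/

import Mathlib

/-!
Write `f_ℓ(v) = (C v^α - v²) + p_ℓ(v)`, where `C v^α - v² = v^α (C - v^{2-α})` changes sign exactly
at `L = C^{1/(2-α)}` and the perturbation `p_ℓ` is positive for `ℓ > 0` and tends to `0` as `ℓ → 0`.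
Hence `f_ℓ > 0` on `(0, L]`, so `v_max(ℓ) > L`; and for every `u > L` eventually `f_ℓ(u) < 0`, so by
the intermediate value theorem `f_ℓ` has a root in `(L, u)` and `v_max(ℓ) < u`.
-/

open Filter Set Topology

theorem tendsto_of_isLeast_pos_root {ι : Type*} {l : Filter ι} {f : ι → ℝ → ℝ} {r : ι → ℝ}
    {L : ℝ} (hL : 0 < L) (hr : ∀ᶠ i in l, IsLeast {v | 0 < v ∧ f i v = 0} (r i))
    (hpos : ∀ᶠ i in l, ∀ v ∈ Ioc 0 L, 0 < f i v)
    (hcont : ∀ᶠ i in l, ContinuousOn (f i) (Ioi 0))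
    (hneg : ∀ u, L < u → ∀ᶠ i in l, f i u < 0) :
    Tendsto r l (𝓝 L) := by
  refine tendsto_order.2 ⟨fun a ha => ?_, fun u hu => ?_⟩
  · filter_upwards [hr, hpos] with i ⟨⟨hr0, hroot⟩, _⟩ hpos
    by_contra! hle
    exact (hpos (r i) ⟨hr0, hle.trans ha.le⟩).ne' hroot
  · filter_upwards [hr, hpos, hcont, hneg u hu] with i ⟨_, hleast⟩ hpos hcont hfu
    have hfL : 0 < f i L := hpos L ⟨hL, le_rfl⟩
    obtain ⟨v, ⟨hLv, hvu⟩, hv⟩ := intermediate_value_Ioo' hu.le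
      (hcont.mono fun x hx => hL.trans_le hx.1) ⟨hfu, hfL⟩
    exact (hleast ⟨hL.trans hLv, hv⟩).trans_lt hvu

theorem sq_le_mul_rpow_iff {C α v : ℝ} (hC : 0 < C) (hα : α < 2) (hv : 0 < v) :
    v ^ 2 ≤ C * v ^ α ↔ v ≤ C ^ (1 / (2 - α)) := by
  have hsplit : v ^ 2 = v ^ (2 - α) * v ^ α := by
    rw [← Real.rpow_add hv, sub_add_cancel, ← Real.rpow_natCast, Nat.cast_ofNat]
  rw [hsplit, mul_le_mul_iff_left₀ (Real.rpow_pos_of_pos hv α), one_div,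
    Real.le_rpow_inv_iff_of_pos hv.le hC.le (by linarith)]

namespace VMax

noncomputable def f (C D E α ℓ v : ℝ) : ℝ :=
  E * ℓ ^ (2 * α / (2 - α)) * 2 ^ (-α / (2 - α)) - v ^ 2 + C * v ^ α
    + D * v ^ (α - 1) * (ℓ / Real.sqrt 2) ^ (2 / (2 - α))

variable {C D E α : ℝ}

theorem f_pos (hC : 0 < C) (hD : 0 ≤ D) (hE : 0 < E) (hα : α < 2) {ℓ v : ℝ} (hℓ : 0 < ℓ)
    (hv : 0 < v) (hvL : v ≤ C ^ (1 / (2 - α))) : 0 < f C D E α ℓ v := by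
  have hconst : 0 < E * ℓ ^ (2 * α / (2 - α)) * 2 ^ (-α / (2 - α)) := by positivity
  have hdrift : 0 ≤ D * v ^ (α - 1) * (ℓ / Real.sqrt 2) ^ (2 / (2 - α)) := by positivity
  have hmain := (sq_le_mul_rpow_iff hC hα hv).2 hvL
  unfold f
  linarith

theorem continuousOn_f (ℓ : ℝ) : ContinuousOn (f C D E α ℓ) (Ioi 0) := by
  have hne : ∀ p : ℝ, ∀ x ∈ Ioi (0 : ℝ), x ≠ 0 ∨ 0 ≤ p := fun _ _ hx => Or.inl hx.ne'
  exact ((continuousOn_const.sub (continuousOn_id.pow 2)).add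
    (continuousOn_const.mul (continuousOn_id.rpow_const (hne _)))).add
    ((continuousOn_const.mul (continuousOn_id.rpow_const (hne _))).mul continuousOn_const)

theorem tendsto_f_zero (hα0 : 0 < α) (hα2 : α < 2) (v : ℝ) :
    Tendsto (fun ℓ => f C D E α ℓ v) (𝓝 0) (𝓝 (C * v ^ α - v ^ 2)) := by
  have ha : 0 < 2 * α / (2 - α) := by apply div_pos <;> linarith
  have hb : 0 < 2 / (2 - α) := by apply div_pos <;> linarith
  have hcont : ContinuousAt (fun ℓ => f C D E α ℓ v) 0 := by
    unfold f
    have hconst := Real.continuousAt_rpow_const 0 _ (Or.inr ha.le)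
    have hdrift : ContinuousAt (fun ℓ : ℝ => (ℓ / Real.sqrt 2) ^ (2 / (2 - α))) 0 :=
      (Real.continuousAt_rpow_const _ _ (Or.inr hb.le)).comp
        (continuous_id.div_const (Real.sqrt 2)).continuousAt
    exact (((continuousAt_const.mul hconst).mul continuousAt_const).sub continuousAt_const).add
      continuousAt_const |>.add (continuousAt_const.mul hdrift)
  convert hcont.tendsto using 2
  simp only [f, Real.zero_rpow ha.ne', Real.zero_rpow hb.ne', zero_div, mul_zero, zero_mul,
    zero_sub, add_zero]
  ring

end VMax

/-- As `ℓ → 0⁺`, the smallest positive root `v_max(ℓ)` of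
`f_ℓ(v) = E ℓ^{2α/(2−α)} 2^{−α/(2−α)} − v² + C v^α + D v^{α−1}(ℓ/√2)^{2/(2−α)}`
converges to `C^{1/(2−α)}`, the unique positive root of `C v^α = v²`. -/
theorem vmax_limit (C D E α : ℝ) (hC : 0 < C) (hD : 0 ≤ D) (hE : 0 < E)
    (hα1 : 1 < α) (hα2 : α < 2) (vmax : ℝ → ℝ)
    (hvmax : ∀ ℓ : ℝ, 0 < ℓ →
      (0 < vmax ℓ ∧
        E * ℓ ^ (2 * α / (2 - α)) * 2 ^ (-α / (2 - α)) - vmax ℓ ^ 2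
          + C * vmax ℓ ^ α
          + D * vmax ℓ ^ (α - 1) * (ℓ / Real.sqrt 2) ^ (2 / (2 - α)) = 0) ∧
      ∀ v : ℝ, 0 < v →
        E * ℓ ^ (2 * α / (2 - α)) * 2 ^ (-α / (2 - α)) - v ^ 2 + C * v ^ α
          + D * v ^ (α - 1) * (ℓ / Real.sqrt 2) ^ (2 / (2 - α)) = 0 →
        vmax ℓ ≤ v) :
    Filter.Tendsto vmax (nhdsWithin 0 (Set.Ioi 0)) (nhds (C ^ (1 / (2 - α)))) := by
  have hℓ : ∀ᶠ ℓ in 𝓝[>] (0 : ℝ), 0 < ℓ := self_mem_nhdsWithin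
  refine tendsto_of_isLeast_pos_root (f := VMax.f C D E α) (Real.rpow_pos_of_pos hC _) ?_ ?_
    (Eventually.of_forall VMax.continuousOn_f) fun u hu => ?_
  · filter_upwards [hℓ] with ℓ hℓ
    exact ⟨(hvmax ℓ hℓ).1, fun v hv => (hvmax ℓ hℓ).2 v hv.1 hv.2⟩
  · filter_upwards [hℓ] with ℓ hℓ v hv
    exact VMax.f_pos hC hD hE hα2 hℓ hv.1 hv.2
  · have hu0 : 0 < u := (Real.rpow_pos_of_pos hC _).trans hu
    have hlim : C * u ^ α - u ^ 2 < 0 :=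
      sub_neg.2 (not_le.1 fun h => hu.not_ge ((sq_le_mul_rpow_iff hC hα2 hu0).1 h))
    exact ((VMax.tendsto_f_zero (by linarith) hα2 u).mono_left
      nhdsWithin_le_nhds).eventually_lt_const hlim
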